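/- For all n ≥ 0 and k ∈ ℤ, β_n^{(k)}(x|λ) = Σ_{l=0}^{n} C(n,l) ( Σ_{p=1}^{l+1} ((−1)^{p+l+1} p!/p^k) · S_2(l+1,p)/(l+1) ) β_{n−l}(x|λ), expressing the degenerate poly-Bernoulli polynomials in terms of the degenerate Bernoulli polynomials and Stirling numbers of the second kind. -/

import Mathlib

open Finset

/-- The generalized falling factorial `(x|λ)ₙ = x(x−λ)(x−2λ)⋯(x−(n−1)λ)`. -/
noncomputable def genFall (lam x : ℂ) (n : ℕ) : ℂ :=
  ∏ i ∈ Finset.range n, (x - (i : ℂ) * lam)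

/-- The formal power series `(1+λt)^{x/λ} = Σ_{n≥0} (x|λ)ₙ tⁿ/n!`. -/
noncomputable def degExp (lam x : ℂ) : PowerSeries ℂ :=
  PowerSeries.mk fun n => genFall lam x n / (n.factorial : ℂ)

/-- The formal power series `1 - e^{-t}`. -/
noncomputable def oneSubExpNeg : PowerSeries ℂ :=
  PowerSeries.mk fun n => if n = 0 then 0 else -((-1 : ℂ) ^ n) / (n.factorial : ℂ)

/-- The formal power series `Li_k(1 - e^{-t}) = Σ_{n≥1} (1-e^{-t})ⁿ/nᵏ`; since
`(1-e^{-t})ⁿ` has order at least `n`, the coefficient of `tˡ` only involves `n ≤ l`. -/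
noncomputable def polyLogComp (k : ℤ) : PowerSeries ℂ :=
  PowerSeries.mk fun l =>
    ∑ n ∈ Finset.Icc 1 l, ((n : ℂ) ^ k)⁻¹ * PowerSeries.coeff l (oneSubExpNeg ^ n)

/-- Stirling numbers of the second kind `S₂(n, k)`. -/
def S2 : ℕ → ℕ → ℕ
  | 0, 0 => 1
  | 0, _ + 1 => 0
  | _ + 1, 0 => 0
  | n + 1, k + 1 => (k + 1) * S2 n (k + 1) + S2 n k

/-! Since `Li_k(1 - e^{-t})` has no constant term, it equals `t · D(t)`; the two defining
identities then give `Σ βₙ⁽ᵏ⁾(x|λ) tⁿ/n! = D(t) · Σ βₙ(x|λ) tⁿ/n!` after cancelling the nonzero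
series `(1+λt)^{1/λ} - 1`, and comparing coefficients of this product of exponential generating
functions is a binomial convolution. The coefficients of `D` come from
`(1 - e^{-t})^p = Σₘ (-1)^{m+p} p! S₂(m,p) tᵐ/m!`, which follows by induction from
`d/dt (1 - e^{-t}) = 1 - (1 - e^{-t})`: differentiating `(1 - e^{-t})^{p+1}` reproduces the
recursion of `S₂`. -/

namespace PowerSeries

theorem coeff_mk_div_factorial_mul_mk_div_factorial {K : Type*} [Field K] [CharZero K]
    (a b : ℕ → K) (n : ℕ) :
    coeff n ((mk fun i => a i / i.factorial) * mk fun j => b j / j.factorial) =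
      (∑ l ∈ range (n + 1), (n.choose l : K) * a l * b (n - l)) / n.factorial := by
  rw [coeff_mul, Nat.sum_antidiagonal_eq_sum_range_succ_mk, sum_div]
  refine sum_congr rfl fun l hl => ?_
  rw [coeff_mk, coeff_mk, Nat.cast_choose K (Nat.le_of_lt_succ (mem_range.mp hl))]
  field_simp [Nat.factorial_ne_zero]

end PowerSeries

open PowerSeries

theorem constantCoeff_oneSubExpNeg : constantCoeff oneSubExpNeg = 0 := by
  simp [oneSubExpNeg]

theorem derivative_oneSubExpNeg : derivative ℂ oneSubExpNeg = 1 - oneSubExpNeg := by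
  ext n
  rw [coeff_derivative]
  simp only [oneSubExpNeg, coeff_mk, map_sub, coeff_one, Nat.succ_ne_zero, if_false]
  split_ifs with hn
  · subst hn; norm_num
  · rw [Nat.factorial_succ, pow_succ]
    push_cast
    field_simp
    ring

theorem coeff_succ_oneSubExpNeg_pow_succ (m p : ℕ) :
    coeff (m + 1) (oneSubExpNeg ^ (p + 1)) * (m + 1) =
      (p + 1) * (coeff m (oneSubExpNeg ^ p) - coeff m (oneSubExpNeg ^ (p + 1))) := by
  rw [← coeff_derivative, Derivation.leibniz_pow, derivative_oneSubExpNeg, Nat.add_sub_cancel,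
    smul_eq_mul, nsmul_eq_mul, mul_sub, mul_one, ← pow_succ, ← map_natCast (C (R := ℂ)),
    coeff_C_mul, map_sub]
  push_cast
  ring

theorem coeff_oneSubExpNeg_pow (p m : ℕ) :
    coeff m (oneSubExpNeg ^ p) =
      (-1 : ℂ) ^ (m + p) * p.factorial * S2 m p / m.factorial := by
  induction p generalizing m with
  | zero => rcases m with _ | m <;> simp [S2, coeff_one]
  | succ p ihp =>
    induction m with
    | zero =>
      simpa [S2, zero_pow (Nat.succ_ne_zero p)] using
        congrArg (· ^ (p + 1)) constantCoeff_oneSubExpNeg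
    | succ m ihm =>
      have hrec := coeff_succ_oneSubExpNeg_pow_succ m p
      rw [ihp, ihm] at hrec
      refine mul_right_cancel₀ (Nat.cast_add_one_ne_zero (R := ℂ) m) (hrec.trans ?_)
      simp only [S2, Nat.factorial_succ]
      push_cast
      field_simp
      ring

noncomputable def polyLogDivXCoeff (k : ℤ) (l : ℕ) : ℂ :=
  ∑ p ∈ Icc 1 (l + 1),
    (-1 : ℂ) ^ (p + l + 1) * (p.factorial : ℂ) / (p : ℂ) ^ k * (S2 (l + 1) p : ℂ) / ((l : ℂ) + 1)

noncomputable def polyLogCompDivX (k : ℤ) : PowerSeries ℂ :=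
  mk fun l => polyLogDivXCoeff k l / l.factorial

theorem X_mul_polyLogCompDivX (k : ℤ) : X * polyLogCompDivX k = polyLogComp k := by
  ext m
  rcases m with _ | l
  · simp [polyLogComp]
  · rw [coeff_succ_X_mul]
    simp only [polyLogComp, polyLogCompDivX, polyLogDivXCoeff, coeff_mk, sum_div]
    refine sum_congr rfl fun p hp => ?_
    have hp0 : (p : ℂ) ≠ 0 := Nat.cast_ne_zero.2 (by grind)
    rw [coeff_oneSubExpNeg_pow, Nat.factorial_succ]
    push_cast
    field_simp
    ring

theorem degExp_one_sub_one_ne_zero (lam : ℂ) : degExp lam 1 - 1 ≠ 0 := by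
  intro h
  simpa [degExp, genFall, coeff_one] using congrArg (coeff 1) h

/-- `βₙ⁽ᵏ⁾(x|λ) = Σ_{l=0}^{n} C(n,l) (Σ_{p=1}^{l+1}
((−1)^{p+l+1} p!/pᵏ)·S₂(l+1,p)/(l+1)) β_{n−l}(x|λ)`. -/
theorem degenerate_poly_bernoulli_in_terms_of_degenerate_bernoulli (k : ℤ) (lam : ℂ)
    (βk β : ℕ → ℂ → ℂ)
    (hβk : ∀ x : ℂ,
      (PowerSeries.mk fun n => βk n x / (n.factorial : ℂ)) * (degExp lam 1 - 1)
        = polyLogComp k * degExp lam x)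
    (hβ : ∀ x : ℂ,
      (PowerSeries.mk fun n => β n x / (n.factorial : ℂ)) * (degExp lam 1 - 1)
        = PowerSeries.X * degExp lam x)
    (n : ℕ) (x : ℂ) :
    βk n x = ∑ l ∈ Finset.range (n + 1), (n.choose l : ℂ) *
      (∑ p ∈ Finset.Icc 1 (l + 1),
        (-1 : ℂ) ^ (p + l + 1) * (p.factorial : ℂ) / (p : ℂ) ^ k
          * (S2 (l + 1) p : ℂ) / ((l : ℂ) + 1)) * β (n - l) x := by
  have hser : (mk fun n => βk n x / n.factorial) =
      polyLogCompDivX k * mk fun n => β n x / n.factorial := by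
    refine mul_right_cancel₀ (degExp_one_sub_one_ne_zero lam) ?_
    rw [hβk, ← X_mul_polyLogCompDivX, mul_assoc (polyLogCompDivX k), hβ]
    ring
  have hcoeff := congrArg (coeff n) hser
  rw [coeff_mk, polyLogCompDivX, coeff_mk_div_factorial_mul_mk_div_factorial] at hcoeff
  exact (div_left_inj' (Nat.cast_ne_zero.2 n.factorial_ne_zero)).1 hcoeff
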